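/- arXiv:0902.3771 — 2 statements merged into one kernel-verified Lean document; each statement's English description precedes it below -/
import Mathlib

section
/- If (A, ∘) is a right-Novikov algebra and (U, ·) is a left-Novikov algebra, then the tensor product A ⊗ U with multiplication (a⊗u)∘(b⊗v) = (a∘b)⊗(u·v) is Lie-admissible: the commutator [x,y] = x∘y - y∘x on A ⊗ U satisfies the Jacobi identity. -/
open TensorProduct

/-- The tensor product of a right-Novikov algebra and a left-Novikov algebra is
Lie-admissible. -/
theorem stmt_9 {R A U : Type*} [CommRing R] [AddCommGroup A] [Module R A]
    [AddCommGroup U] [Module R U]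
    (mulA : A →ₗ[R] A →ₗ[R] A) (mulU : U →ₗ[R] U →ₗ[R] U)
    (hlcA : ∀ a b c : A, mulA a (mulA b c) = mulA b (mulA a c))
    (hrsA : ∀ a b c : A,
      mulA a (mulA b c) - mulA (mulA a b) c = mulA a (mulA c b) - mulA (mulA a c) b)
    (hrcU : ∀ u v w : U, mulU (mulU u v) w = mulU (mulU u w) v)
    (hlsU : ∀ u v w : U,
      mulU u (mulU v w) - mulU (mulU u v) w = mulU v (mulU u w) - mulU (mulU v u) w) :
    ∀ x y z : A ⊗[R] U,
      (fun p q => TensorProduct.map₂ mulA mulU p q - TensorProduct.map₂ mulA mulU q p)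
        ((fun p q => TensorProduct.map₂ mulA mulU p q - TensorProduct.map₂ mulA mulU q p) x y) z
      + (fun p q => TensorProduct.map₂ mulA mulU p q - TensorProduct.map₂ mulA mulU q p)
        ((fun p q => TensorProduct.map₂ mulA mulU p q - TensorProduct.map₂ mulA mulU q p) y z) x
      + (fun p q => TensorProduct.map₂ mulA mulU p q - TensorProduct.map₂ mulA mulU q p)
        ((fun p q => TensorProduct.map₂ mulA mulU p q - TensorProduct.map₂ mulA mulU q p) z x) y
      = 0 := by
  intro x y z
  set F := TensorProduct.map₂ mulA mulU with hF
  have hpure : ∀ (a b : A) (u v : U),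
      F (a ⊗ₜ[R] u) (b ⊗ₜ[R] v) = (mulA a b) ⊗ₜ[R] (mulU u v) := by
    intro a b u v
    simp [hF, TensorProduct.map₂_apply_tmul]
  have keyA : ∀ a b c : A,
      mulA (mulA a b) c = mulA a (mulA b c) - mulA c (mulA a b) + mulA (mulA a c) b := by
    intro a b c
    have h := hrsA a b c
    rw [hlcA a c b] at h
    have h2 : mulA (mulA a b) c
        = mulA a (mulA b c) - (mulA c (mulA a b) - mulA (mulA a c) b) := by
      rw [← h]; abel
    rw [h2]; abel
  have keyU : ∀ u v w : U,
      mulU v (mulU u w) = mulU u (mulU v w) - mulU (mulU u v) w + mulU (mulU v w) u := by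
    intro u v w
    have h := hlsU u v w
    rw [hrcU v u w] at h
    have h2 : mulU v (mulU u w)
        = (mulU u (mulU v w) - mulU (mulU u v) w) + mulU (mulU v w) u := by
      rw [h]; abel
    rw [h2]
  have key : ∀ (a b c : A) (u v w : U),
      (F (F (a ⊗ₜ[R] u) (b ⊗ₜ[R] v) - F (b ⊗ₜ[R] v) (a ⊗ₜ[R] u)) (c ⊗ₜ[R] w)
        - F (c ⊗ₜ[R] w) (F (a ⊗ₜ[R] u) (b ⊗ₜ[R] v) - F (b ⊗ₜ[R] v) (a ⊗ₜ[R] u)))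
      + (F (F (b ⊗ₜ[R] v) (c ⊗ₜ[R] w) - F (c ⊗ₜ[R] w) (b ⊗ₜ[R] v)) (a ⊗ₜ[R] u)
        - F (a ⊗ₜ[R] u) (F (b ⊗ₜ[R] v) (c ⊗ₜ[R] w) - F (c ⊗ₜ[R] w) (b ⊗ₜ[R] v)))
      + (F (F (c ⊗ₜ[R] w) (a ⊗ₜ[R] u) - F (a ⊗ₜ[R] u) (c ⊗ₜ[R] w)) (b ⊗ₜ[R] v)
        - F (b ⊗ₜ[R] v) (F (c ⊗ₜ[R] w) (a ⊗ₜ[R] u) - F (a ⊗ₜ[R] u) (c ⊗ₜ[R] w)))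
      = 0 := by
    intro a b c u v w
    simp only [map_sub, LinearMap.sub_apply, hpure]
    rw [hrcU v u w, hrcU w v u, hrcU u w v, hlcA c b a, hlcA a c b, hlcA b a c,
      keyA a b c, keyA b c a, keyA c a b, keyU u v w, keyU v w u, keyU w u v]
    simp only [tmul_sub, tmul_add, sub_tmul, add_tmul]
    abel
  show F (F x y - F y x) z - F z (F x y - F y x)
      + (F (F y z - F z y) x - F x (F y z - F z y))
      + (F (F z x - F x z) y - F y (F z x - F x z)) = 0
  induction x using TensorProduct.induction_on with
  | zero => simp
  | add x₁ x₂ h1 h2 =>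
    simp only [map_add, LinearMap.add_apply, map_sub, LinearMap.sub_apply] at h1 h2 ⊢
    have h := congrArg₂ (fun p q : A ⊗[R] U => p + q) h1 h2
    simp only [add_zero] at h
    rw [← h]; abel
  | tmul a u =>
    induction y using TensorProduct.induction_on with
    | zero => simp
    | add y₁ y₂ h1 h2 =>
      simp only [map_add, LinearMap.add_apply, map_sub, LinearMap.sub_apply] at h1 h2 ⊢
      have h := congrArg₂ (fun p q : A ⊗[R] U => p + q) h1 h2
      simp only [add_zero] at h
      rw [← h]; abel
    | tmul b v =>
      induction z using TensorProduct.induction_on with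
      | zero => simp
      | add z₁ z₂ h1 h2 =>
        simp only [map_add, LinearMap.add_apply, map_sub, LinearMap.sub_apply] at h1 h2 ⊢
        have h := congrArg₂ (fun p q : A ⊗[R] U => p + q) h1 h2
        simp only [add_zero] at h
        rw [← h]; abel
      | tmul c w => exact key a b c u v w
end

section
/- An algebra (U, ·) satisfies all six identities: (u·v)·w - (u·w)·v = 0; -(v·w)·u - u·(v·w) + v·(u·w) + (u·w)·v = 0; -w·(u·v) + (w·v)·u + u·(w·v) - (u·w)·v = 0; -(v·u)·w + (v·w)·u = 0; w·(v·u) + (v·w)·u - (w·v)·u - v·(w·u) = 0; -(w·v)·u + (w·u)·v = 0 for all u, v, w, if and only if (U, ·) is a left-Novikov algebra. -/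
/-- (U, ·) satisfies the six identities iff it is left-Novikov. -/
theorem stmt_14 {R U : Type*} [CommRing R] [AddCommGroup U] [Module R U]
    (mul : U →ₗ[R] U →ₗ[R] U) :
    ((∀ u v w : U, mul (mul u v) w - mul (mul u w) v = 0) ∧
     (∀ u v w : U,
       -mul (mul v w) u - mul u (mul v w) + mul v (mul u w) + mul (mul u w) v = 0) ∧
     (∀ u v w : U,
       -mul w (mul u v) + mul (mul w v) u + mul u (mul w v) - mul (mul u w) v = 0) ∧
     (∀ u v w : U, -mul (mul v u) w + mul (mul v w) u = 0) ∧
     (∀ u v w : U,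
       mul w (mul v u) + mul (mul v w) u - mul (mul w v) u - mul v (mul w u) = 0) ∧
     (∀ u v w : U, -mul (mul w v) u + mul (mul w u) v = 0)) ↔
    ((∀ u v w : U, mul (mul u v) w = mul (mul u w) v) ∧
     (∀ u v w : U,
       mul u (mul v w) - mul (mul u v) w = mul v (mul u w) - mul (mul v u) w)) := by
  constructor
  · rintro ⟨h1, h2, h3, h4, h5, h6⟩
    refine ⟨fun u v w => ?_, fun u v w => ?_⟩
    · linear_combination (norm := abel) h1 u v w
    · linear_combination (norm := abel) h1 u w v - h2 u v w - h4 u v w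
  · rintro ⟨ha, hb⟩
    refine ⟨fun u v w => ?_, fun u v w => ?_, fun u v w => ?_, fun u v w => ?_,
      fun u v w => ?_, fun u v w => ?_⟩
    · linear_combination (norm := abel) ha u v w
    · linear_combination (norm := abel) ha u w v - ha v w u - hb u v w
    · linear_combination (norm := abel) ha w v u - hb w u v
    · linear_combination (norm := abel) ha v w u
    · linear_combination (norm := abel) hb w v u
    · linear_combination (norm := abel) ha w u v
end
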